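/- Let G be a commutative multiplicative group, K a G-graded field, g ∈ G, and f a nonzero homogeneous polynomial in K[g⁻¹T]. Then there exists a finite extension of G-graded fields L/K such that in L[g⁻¹T] the polynomial f splits completely into a product of homogeneous polynomials of degree at most 1; in particular, if f is monic then f = (T − x₁)···(T − x_n) with each x_i a homogeneous element of L of grading g. -/

import Mathlib

universe u v

/-- A `G`-graded commutative ring structure on `A`: graded pieces `deg g`,
multiplicativity of the grading, and an internal direct sum decomposition
recorded by the homogeneous-component function `comp`. -/
structure GradedStr (G : Type u) [CommGroup G] (A : Type v) [CommRing A] where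
  deg : G → AddSubgroup A
  one_mem : (1 : A) ∈ deg 1
  mul_mem : ∀ {g h : G} {a b : A}, a ∈ deg g → b ∈ deg h → a * b ∈ deg (g * h)
  comp : A → G → A
  comp_mem : ∀ a g, comp a g ∈ deg g
  comp_add : ∀ a b g, comp (a + b) g = comp a g + comp b g
  comp_of_mem : ∀ {a : A} {g : G}, a ∈ deg g → comp a g = a
  comp_of_mem_ne : ∀ {a : A} {g g' : G}, a ∈ deg g → g' ≠ g → comp a g' = 0
  finite_support : ∀ a : A, (Function.support (comp a)).Finite
  sum_comp : ∀ a : A, ∑ᶠ g, comp a g = a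

namespace GradedStr

variable {G : Type u} [CommGroup G] {A : Type v} [CommRing A]

/-- `a` is homogeneous: it lies in some graded piece. -/
def IsHomog (𝒜 : GradedStr G A) (a : A) : Prop := ∃ g, a ∈ 𝒜.deg g

/-- A `G`-graded field: a nonzero graded ring in which every nonzero homogeneous
element is invertible. -/
def IsGradedField (𝒜 : GradedStr G A) : Prop :=
  Nontrivial A ∧ ∀ a : A, 𝒜.IsHomog a → a ≠ 0 → IsUnit a

/-- A graded subring: a subring stable under taking homogeneous components. -/
def IsGradedSubring (𝒜 : GradedStr G A) (S : Subring A) : Prop :=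
  ∀ x ∈ S, ∀ g, 𝒜.comp x g ∈ S

/-- A graded subfield of a graded field: a graded subring containing the inverses of
its nonzero homogeneous elements. -/
def IsGradedSubfield (𝒜 : GradedStr G A) (S : Subring A) : Prop :=
  𝒜.IsGradedSubring S ∧ ∀ x ∈ S, 𝒜.IsHomog x → x ≠ 0 → Ring.inverse x ∈ S

/-- The additive subgroup of homogeneous polynomials of grading `h` in `K[g₀⁻¹ T]`,
the polynomial ring in which `T` is declared homogeneous of grading `g₀`: the
coefficient of `T^n` must be homogeneous of grading `h * g₀⁻ⁿ`. -/
def polyDeg (𝒜 : GradedStr G A) (g₀ h : G) : AddSubgroup (Polynomial A) where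
  carrier := {p | ∀ n : ℕ, p.coeff n ∈ 𝒜.deg (h * (g₀ ^ n)⁻¹)}
  zero_mem' := by intro n; simpa using (𝒜.deg (h * (g₀ ^ n)⁻¹)).zero_mem
  add_mem' := by
    intro p q hp hq n
    rw [Polynomial.coeff_add]
    exact (𝒜.deg _).add_mem (hp n) (hq n)
  neg_mem' := by
    intro p hp n
    rw [Polynomial.coeff_neg]
    exact (𝒜.deg _).neg_mem (hp n)

/-- A homogeneous polynomial in `K[g₀⁻¹T]`. -/
def IsHomogPoly (𝒜 : GradedStr G A) (g₀ : G) (p : Polynomial A) : Prop :=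
  ∃ h, p ∈ 𝒜.polyDeg g₀ h

/-- The graded fraction field of a graded subring of a graded field, computed inside
the ambient graded field: the subring generated by `S` together with the inverses of
the nonzero homogeneous elements of `S`. -/
def fracIn (𝒜 : GradedStr G A) (S : Subring A) : Subring A :=
  Subring.closure (↑S ∪ {y : A | ∃ x ∈ S, x ≠ 0 ∧ 𝒜.IsHomog x ∧ y = Ring.inverse x})

end GradedStr

/-- `x` is integral over the subring `S` (satisfies a monic polynomial equation with
coefficients in `S`). -/
def IntegralOver {A : Type v} [CommRing A] (S : Subring A) (x : A) : Prop :=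
  ∃ p : Polynomial A, p.Monic ∧ (∀ n, p.coeff n ∈ S) ∧ Polynomial.eval x p = 0

/-- Algebraic independence of a family of elements over a subring: the evaluation map
from the (multivariate) polynomial ring is injective.  (For homogeneous elements this
is graded algebraic independence, the grading playing no role in injectivity.) -/
def AlgIndepOver {A : Type v} [CommRing A] {ι : Type*} (S : Subring A) (T : ι → A) : Prop :=
  Function.Injective (MvPolynomial.eval₂Hom S.subtype T)

/-- A graded valuation ring of the graded subfield `F` of the ambient graded field:
a graded subring `O ⊆ F` such that every nonzero homogeneous element `f` of `F`
satisfies `f ∈ O` or `f⁻¹ ∈ O`. -/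
def IsGVRofSubfield {G : Type u} [CommGroup G] {A : Type v} [CommRing A]
    (𝒜 : GradedStr G A) (F : Subring A) (O : Subring A) : Prop :=
  O ≤ F ∧ 𝒜.IsGradedSubring O ∧
    ∀ f ∈ F, f ≠ 0 → 𝒜.IsHomog f → f ∈ O ∨ Ring.inverse f ∈ O

/-!
Induction on the degree of `f`, adjoining one homogeneous root at a time. Dividing `f` by its
leading coefficient, which is homogeneous and hence a unit, makes it monic; pick a monic
homogeneous factor `p` of `f` of least positive degree. Grading each class of `K[T]/(p)` by its
remainder mod `p` makes `K[T]/(p)` a graded ring, free over `K` on `1, T, …, T ^ (deg p - 1)`, in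
which `T` has grading `g₀`. It is a graded field: Euclid's algorithm applied to `p` and a
homogeneous `q` only produces homogeneous remainders, so by minimality of `p` it ends in a unit.
Then `X - T` divides `f`, and the quotient is homogeneous of smaller degree.
-/

open Polynomial

namespace RingHom

variable {R S T : Type*} [CommRing R] [CommRing S] [CommRing T]

def IsFiniteFree (φ : R →+* S) : Prop :=
  ∃ (n : ℕ) (e : Fin n → S), ∀ y : S, ∃! c : Fin n → R, y = ∑ i, φ (c i) * e i

theorem isFiniteFree_algebraMap_of_basis [Algebra R S] {n : ℕ} (b : Module.Basis (Fin n) R S) :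
    (algebraMap R S).IsFiniteFree := by
  refine ⟨n, b, fun y => ?_⟩
  obtain ⟨c, hc, hu⟩ := b.equivFun.symm.bijective.existsUnique y
  simp only [b.equivFun_symm_apply, Algebra.smul_def] at hc hu
  exact ⟨c, hc.symm, fun c' hc' => hu c' hc'.symm⟩

theorem IsFiniteFree.exists_basis {φ : R →+* S} (hφ : φ.IsFiniteFree) :
    letI := φ.toAlgebra; ∃ n, Nonempty (Module.Basis (Fin n) R S) := by
  let := φ.toAlgebra
  obtain ⟨n, e, he⟩ := hφ
  have hbij : Function.Bijective (Fintype.linearCombination R e) :=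
    Function.bijective_iff_existsUnique _ |>.mpr fun y => by
      simpa only [Fintype.linearCombination_apply, Algebra.smul_def, RingHom.algebraMap_toAlgebra,
        eq_comm] using he y
  exact ⟨n, ⟨Module.Basis.ofEquivFun (LinearEquiv.ofBijective _ hbij).symm⟩⟩

theorem isFiniteFree_id : (RingHom.id R).IsFiniteFree :=
  isFiniteFree_algebraMap_of_basis (Module.Basis.singleton (Fin 1) R)

theorem IsFiniteFree.comp {ψ : S →+* T} {φ : R →+* S} (hψ : ψ.IsFiniteFree)
    (hφ : φ.IsFiniteFree) : (ψ.comp φ).IsFiniteFree := by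
  let := φ.toAlgebra
  let := ψ.toAlgebra
  let := (ψ.comp φ).toAlgebra
  have : IsScalarTower R S T := IsScalarTower.of_algebraMap_eq fun _ => rfl
  obtain ⟨n, ⟨b⟩⟩ := IsFiniteFree.exists_basis hφ
  obtain ⟨m, ⟨c⟩⟩ := IsFiniteFree.exists_basis hψ
  exact isFiniteFree_algebraMap_of_basis ((b.smulTower c).reindex finProdFinEquiv)

end RingHom

namespace GradedStr

variable {G : Type u} [CommGroup G]

section Ring

variable {A : Type*} [CommRing A] (𝒜 : GradedStr G A)

def compHom (g : G) : A →+ A := AddMonoidHom.mk' (𝒜.comp · g) (𝒜.comp_add · · g)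

@[simp] theorem compHom_apply (g : G) (a : A) : 𝒜.compHom g a = 𝒜.comp a g := rfl

theorem comp_zero (g : G) : 𝒜.comp 0 g = 0 := (𝒜.compHom g).map_zero

theorem comp_mul_of_mem_left {a : A} {g₁ : G} (ha : a ∈ 𝒜.deg g₁) (b : A) (g₂ : G) :
    𝒜.comp (a * b) (g₁ * g₂) = a * 𝒜.comp b g₂ := by
  have hfin : (Function.support fun g => a * 𝒜.comp b g).Finite :=
    (𝒜.finite_support b).subset fun g hg h0 => hg (by simp only [h0, mul_zero])
  calc 𝒜.comp (a * b) (g₁ * g₂) = 𝒜.compHom (g₁ * g₂) (∑ᶠ g, a * 𝒜.comp b g) := by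
        rw [← mul_finsum' _ _ (𝒜.finite_support b), 𝒜.sum_comp, compHom_apply]
    _ = ∑ᶠ g, 𝒜.comp (a * 𝒜.comp b g) (g₁ * g₂) := map_finsum _ hfin
    _ = a * 𝒜.comp b g₂ := by
      rw [finsum_eq_single _ g₂ fun g hg => 𝒜.comp_of_mem_ne (𝒜.mul_mem ha (𝒜.comp_mem b g))
        (by simpa using hg.symm)]
      exact 𝒜.comp_of_mem (𝒜.mul_mem ha (𝒜.comp_mem b g₂))

theorem mem_deg_inv_of_mul_eq_one {a b : A} {g : G} (ha : a ∈ 𝒜.deg g) (hab : a * b = 1) :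
    b ∈ 𝒜.deg g⁻¹ := by
  have h := 𝒜.comp_mul_of_mem_left ha b g⁻¹
  rw [hab, mul_inv_cancel, 𝒜.comp_of_mem 𝒜.one_mem] at h
  have hb : 𝒜.comp b g⁻¹ = b := by
    calc 𝒜.comp b g⁻¹ = b * a * 𝒜.comp b g⁻¹ := by rw [mul_comm b a, hab, one_mul]
    _ = b := by rw [mul_assoc, ← h, mul_one]
  exact hb ▸ 𝒜.comp_mem b g⁻¹

/-- The grading `S_g = σ⁻¹(A_g)` on a quotient `π : A → S` with an additive section `σ` such
that `σ ∘ π` preserves each `A_g`. -/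
def ofSection {S : Type*} [CommRing S] (π : A →+* S) (σ : S →+ A)
    (hσ : Function.LeftInverse π σ) (hσdeg : ∀ {r : A} {g : G}, r ∈ 𝒜.deg g → σ (π r) ∈ 𝒜.deg g) :
    GradedStr G S where
  deg g := (𝒜.deg g).comap σ
  one_mem := by simpa using hσdeg 𝒜.one_mem
  mul_mem {_ _ x y} hx hy := by
    have hxy := hσdeg (𝒜.mul_mem hx hy)
    rwa [map_mul, hσ x, hσ y] at hxy
  comp x g := π (𝒜.comp (σ x) g)
  comp_mem x g := hσdeg (𝒜.comp_mem (σ x) g)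
  comp_add x y g := by simp only [map_add, 𝒜.comp_add]
  comp_of_mem {x _} hx := by rw [𝒜.comp_of_mem hx, hσ x]
  comp_of_mem_ne hx hne := by rw [𝒜.comp_of_mem_ne hx hne, map_zero]
  finite_support x :=
    (𝒜.finite_support (σ x)).subset fun g hg h0 => hg (by simp only [h0, map_zero])
  sum_comp x := by rw [← map_finsum π (𝒜.finite_support (σ x)), 𝒜.sum_comp, hσ x]

theorem sum_comp_mul_right (a : A) (w : G) : ∑ᶠ g, 𝒜.comp a (g * w) = a := by
  conv_rhs => rw [← 𝒜.sum_comp a]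
  exact finsum_eq_of_bijective (· * w) (Group.mulRight_bijective w) fun _ => rfl

end Ring

section Polynomial

variable {A : Type*} [CommRing A] (𝒜 : GradedStr G A) (g₀ : G)

theorem C_mem_polyDeg {a : A} {g : G} (ha : a ∈ 𝒜.deg g) : C a ∈ 𝒜.polyDeg g₀ g := by
  rintro (_ | n)
  · simpa using ha
  · simp

theorem X_mem_polyDeg : (X : A[X]) ∈ 𝒜.polyDeg g₀ g₀ := by
  rintro (_ | _ | n)
  · simp
  · simpa using 𝒜.one_mem
  · simp [coeff_X]

theorem X_sub_C_mem_polyDeg {a : A} (ha : a ∈ 𝒜.deg g₀) : X - C a ∈ 𝒜.polyDeg g₀ g₀ :=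
  sub_mem (𝒜.X_mem_polyDeg g₀) (𝒜.C_mem_polyDeg g₀ ha)

theorem mul_mem_polyDeg {g h : G} {q r : A[X]} (hq : q ∈ 𝒜.polyDeg g₀ g)
    (hr : r ∈ 𝒜.polyDeg g₀ h) : q * r ∈ 𝒜.polyDeg g₀ (g * h) := by
  intro n
  rw [coeff_mul]
  refine sum_mem fun ij hij => ?_
  have hdeg : g * h * (g₀ ^ n)⁻¹ = g * (g₀ ^ ij.1)⁻¹ * (h * (g₀ ^ ij.2)⁻¹) := by
    rw [← Finset.HasAntidiagonal.mem_antidiagonal.mp hij, pow_add, mul_inv, mul_mul_mul_comm]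
  exact hdeg ▸ 𝒜.mul_mem (hq ij.1) (hr ij.2)

theorem map_mem_polyDeg {B : Type*} [CommRing B] (ℬ : GradedStr G B) {φ : A →+* B}
    (hφ : ∀ g, ∀ a ∈ 𝒜.deg g, φ a ∈ ℬ.deg g) {h : G} {p : A[X]} (hp : p ∈ 𝒜.polyDeg g₀ h) :
    p.map φ ∈ ℬ.polyDeg g₀ h := fun n => by
  rw [coeff_map]
  exact hφ _ _ (hp n)

noncomputable def polyComp (q : A[X]) (h : G) : A[X] :=
  ∑ n ∈ q.support, monomial n (𝒜.comp (q.coeff n) (h * (g₀ ^ n)⁻¹))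

theorem coeff_polyComp (q : A[X]) (h : G) (n : ℕ) :
    (𝒜.polyComp g₀ q h).coeff n = 𝒜.comp (q.coeff n) (h * (g₀ ^ n)⁻¹) := by
  rw [polyComp, finsetSum_coeff, Finset.sum_eq_single n]
  · rw [coeff_monomial, if_pos rfl]
  · intro m _ hmn
    rw [coeff_monomial, if_neg hmn]
  · intro hn
    rw [coeff_monomial, if_pos rfl, notMem_support_iff.mp hn, 𝒜.comp_zero]

theorem degree_polyComp_le (q : A[X]) (h : G) : (𝒜.polyComp g₀ q h).degree ≤ q.degree :=
  (degree_le_iff_coeff_zero _ _).mpr fun m hm => by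
    rw [coeff_polyComp, coeff_eq_zero_of_degree_lt hm, 𝒜.comp_zero]

theorem finite_support_polyComp (q : A[X]) :
    (Function.support (𝒜.polyComp g₀ q)).Finite := by
  refine (q.support.finite_toSet.biUnion fun n _ =>
    (𝒜.finite_support (q.coeff n)).image (· * g₀ ^ n)).subset fun h hh => ?_
  obtain ⟨n, hn⟩ : ∃ n, (𝒜.polyComp g₀ q h).coeff n ≠ 0 := by
    by_contra! hc
    exact hh (Polynomial.ext hc)
  rw [coeff_polyComp] at hn
  have hqn : q.coeff n ≠ 0 := fun h0 => hn (by rw [h0, 𝒜.comp_zero])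
  exact Set.mem_biUnion (by simpa using hqn) ⟨h * (g₀ ^ n)⁻¹, hn, by group⟩

/-- The graded ring `A[g₀⁻¹T]`. -/
noncomputable def polyStr : GradedStr G A[X] where
  deg := 𝒜.polyDeg g₀
  one_mem := by simpa using 𝒜.C_mem_polyDeg g₀ 𝒜.one_mem
  mul_mem := 𝒜.mul_mem_polyDeg g₀
  comp := 𝒜.polyComp g₀
  comp_mem q h n := by
    rw [coeff_polyComp]
    exact 𝒜.comp_mem _ _
  comp_add q r h := by
    ext n
    simp only [coeff_polyComp, coeff_add, 𝒜.comp_add]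
  comp_of_mem hq := by
    ext n
    rw [coeff_polyComp, 𝒜.comp_of_mem (hq n)]
  comp_of_mem_ne hq hne := by
    ext n
    rw [coeff_polyComp, coeff_zero, 𝒜.comp_of_mem_ne (hq n) (by simpa using hne)]
  finite_support := 𝒜.finite_support_polyComp g₀
  sum_comp q := by
    ext n
    rw [← lcoeff_apply, map_finsum _ (𝒜.finite_support_polyComp g₀ q)]
    simp only [lcoeff_apply, coeff_polyComp]
    exact 𝒜.sum_comp_mul_right _ _

theorem divByMonic_modByMonic_mem_polyDeg {g h : G} {p q : A[X]} (hq : q.Monic)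
    (hqg : q ∈ 𝒜.polyDeg g₀ g) (hp : p ∈ 𝒜.polyDeg g₀ h) :
    p /ₘ q ∈ 𝒜.polyDeg g₀ (g⁻¹ * h) ∧ p %ₘ q ∈ 𝒜.polyDeg g₀ h := by
  nontriviality A
  let P := 𝒜.polyStr g₀
  have hcomp : P.comp (p %ₘ q) h + q * P.comp (p /ₘ q) (g⁻¹ * h) = p := by
    rw [← P.comp_mul_of_mem_left hqg, mul_inv_cancel_left, ← P.comp_add, modByMonic_add_div,
      P.comp_of_mem hp]
  obtain ⟨hdiv, hmod⟩ := div_modByMonic_unique _ _ hq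
    ⟨hcomp, (𝒜.degree_polyComp_le g₀ _ h).trans_lt (degree_modByMonic_lt p hq)⟩
  exact ⟨hdiv ▸ P.comp_mem _ _, hmod ▸ P.comp_mem _ _⟩

theorem modByMonic_mem_polyDeg {g : G} {p q : A[X]} (hp : p.Monic) (hph : 𝒜.IsHomogPoly g₀ p)
    (hq : q ∈ 𝒜.polyDeg g₀ g) : q %ₘ p ∈ 𝒜.polyDeg g₀ g :=
  (𝒜.divByMonic_modByMonic_mem_polyDeg g₀ hp hph.choose_spec hq).2

end Polynomial

section GradedField

variable {K : Type v} [CommRing K] {𝒜 : GradedStr G K} (g₀ : G)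

theorem IsGradedField.exists_monic_eq_C_mul (hK : 𝒜.IsGradedField) {q : K[X]} (hq0 : q ≠ 0)
    (hq : 𝒜.IsHomogPoly g₀ q) :
    ∃ c : K, IsUnit c ∧ ∃ q' : K[X], q'.Monic ∧ 𝒜.IsHomogPoly g₀ q' ∧
      q'.natDegree = q.natDegree ∧ q = C c * q' := by
  obtain ⟨h, hq⟩ := hq
  have hlc : q.leadingCoeff ∈ 𝒜.deg (h * (g₀ ^ q.natDegree)⁻¹) := hq _
  obtain ⟨u, hu⟩ := hK.2 _ ⟨_, hlc⟩ (leadingCoeff_ne_zero.mpr hq0)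
  have hinv : (↑u⁻¹ : K) * q.leadingCoeff = 1 := by rw [← hu, Units.inv_mul]
  have hinv' : q.leadingCoeff * (↑u⁻¹ : K) = 1 := by rw [mul_comm, hinv]
  have hdeg : (↑u⁻¹ : K) ∈ 𝒜.deg (h * (g₀ ^ q.natDegree)⁻¹)⁻¹ :=
    𝒜.mem_deg_inv_of_mul_eq_one hlc hinv'
  refine ⟨q.leadingCoeff, ⟨u, hu⟩, C (↑u⁻¹ : K) * q, monic_C_mul_of_mul_leadingCoeff_eq_one hinv,
    ⟨_, 𝒜.mul_mem_polyDeg g₀ (𝒜.C_mem_polyDeg g₀ hdeg) hq⟩,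
    natDegree_C_mul_of_isUnit u⁻¹.isUnit q, ?_⟩
  rw [← mul_assoc, ← C_mul, hinv', C_1, one_mul]

/-- The grading of `K[g₀⁻¹T]/(p)` in which a class has the grading of its remainder mod `p`. -/
noncomputable def adjoinRootStr (𝒜 : GradedStr G K) (g₀ : G) {p : K[X]} (hp : p.Monic)
    (hph : 𝒜.IsHomogPoly g₀ p) : GradedStr G (AdjoinRoot p) :=
  (𝒜.polyStr g₀).ofSection (AdjoinRoot.mk p) (AdjoinRoot.modByMonicHom hp).toAddMonoidHom
    (AdjoinRoot.mk_leftInverse hp) fun hr => by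
      rw [LinearMap.toAddMonoidHom_coe, AdjoinRoot.modByMonicHom_mk]
      exact 𝒜.modByMonic_mem_polyDeg g₀ hp hph hr

theorem mk_mem_adjoinRootStr_deg {p : K[X]} (hp : p.Monic) (hph : 𝒜.IsHomogPoly g₀ p)
    {q : K[X]} {g : G} (hq : q ∈ 𝒜.polyDeg g₀ g) :
    AdjoinRoot.mk p q ∈ (𝒜.adjoinRootStr g₀ hp hph).deg g := by
  change AdjoinRoot.modByMonicHom hp (AdjoinRoot.mk p q) ∈ 𝒜.polyDeg g₀ g
  rw [AdjoinRoot.modByMonicHom_mk]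
  exact 𝒜.modByMonic_mem_polyDeg g₀ hp hph hq

structure IsFiniteExt {L : Type*} [CommRing L] (𝒜 : GradedStr G K) (ℬ : GradedStr G L)
    (φ : K →+* L) : Prop where
  isGradedField : ℬ.IsGradedField
  injective : Function.Injective φ
  map_mem_deg : ∀ g, ∀ a ∈ 𝒜.deg g, φ a ∈ ℬ.deg g
  isFiniteFree : φ.IsFiniteFree

theorem IsFiniteExt.id (hK : 𝒜.IsGradedField) : 𝒜.IsFiniteExt 𝒜 (RingHom.id K) :=
  ⟨hK, Function.injective_id, fun _ _ ha => ha, RingHom.isFiniteFree_id⟩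

theorem IsFiniteExt.comp {L M : Type*} [CommRing L] [CommRing M] {ℬ : GradedStr G L}
    {𝒞 : GradedStr G M} {φ : K →+* L} {ψ : L →+* M} (hψ : ℬ.IsFiniteExt 𝒞 ψ)
    (hφ : 𝒜.IsFiniteExt ℬ φ) : 𝒜.IsFiniteExt 𝒞 (ψ.comp φ) :=
  ⟨hψ.isGradedField, hψ.injective.comp hφ.injective,
    fun g a ha => hψ.map_mem_deg g _ (hφ.map_mem_deg g a ha), hψ.isFiniteFree.comp hφ.isFiniteFree⟩

/-- The analogue in `K[g₀⁻¹T]` of a monic irreducible polynomial. -/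
structure IsHomogIrreducible (𝒜 : GradedStr G K) (g₀ : G) (p : K[X]) : Prop where
  monic : p.Monic
  isHomogPoly : 𝒜.IsHomogPoly g₀ p
  natDegree_pos : 0 < p.natDegree
  natDegree_le_of_dvd : ∀ q : K[X], q.Monic → 𝒜.IsHomogPoly g₀ q → 0 < q.natDegree → q ∣ p →
    p.natDegree ≤ q.natDegree

theorem exists_isHomogIrreducible_dvd {p : K[X]} (hp : p.Monic) (hph : 𝒜.IsHomogPoly g₀ p)
    (hpd : 0 < p.natDegree) : ∃ r, 𝒜.IsHomogIrreducible g₀ r ∧ r ∣ p := by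
  induction hn : p.natDegree using Nat.strong_induction_on generalizing p with
  | _ n ih =>
    by_cases hirr : ∀ q : K[X], q.Monic → 𝒜.IsHomogPoly g₀ q → 0 < q.natDegree → q ∣ p →
        p.natDegree ≤ q.natDegree
    · exact ⟨p, ⟨hp, hph, hpd, hirr⟩, dvd_rfl⟩
    · simp only [not_forall, not_le] at hirr
      obtain ⟨q, hq, hqh, hqd, hqp, hlt⟩ := hirr
      obtain ⟨r, hr, hrq⟩ := ih _ (hn ▸ hlt) hq hqh hqd rfl
      exact ⟨r, hr, hrq.trans hqp⟩

namespace IsHomogIrreducible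

variable {g₀} {p : K[X]}

/-- Euclid's algorithm stays inside the homogeneous polynomials, and by minimality of `p` it can
only stop at a unit. -/
theorem isUnit_mk (hp : 𝒜.IsHomogIrreducible g₀ p) (hK : 𝒜.IsGradedField) {q : K[X]}
    (hq : 𝒜.IsHomogPoly g₀ q) (hq0 : q ≠ 0) (hqp : q.natDegree < p.natDegree) :
    IsUnit (AdjoinRoot.mk p q) := by
  induction hn : q.natDegree using Nat.strong_induction_on generalizing q with
  | _ n ih =>
    obtain ⟨c, hc, q', hq', hq'h, hdeg, rfl⟩ := hK.exists_monic_eq_C_mul g₀ hq0 hq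
    rw [map_mul]
    refine ((hc.map C).map (AdjoinRoot.mk p)).mul ?_
    rcases Nat.eq_zero_or_pos q'.natDegree with h0 | hpos
    · rw [hq'.natDegree_eq_zero.mp h0, map_one]
      exact isUnit_one
    have hr0 : p %ₘ q' ≠ 0 := fun hr => by
      have := hp.natDegree_le_of_dvd q' hq' hq'h hpos ((modByMonic_eq_zero_iff_dvd hq').mp hr)
      omega
    have hrd : (p %ₘ q').natDegree < q'.natDegree :=
      natDegree_modByMonic_lt p hq' fun h1 => by simp [h1] at hpos
    have hr : IsUnit (AdjoinRoot.mk p (p %ₘ q')) :=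
      ih _ (by omega) (hp.isHomogPoly.imp fun _ => 𝒜.modByMonic_mem_polyDeg g₀ hq' hq'h) hr0
        (by omega) rfl
    have hmod : AdjoinRoot.mk p (p %ₘ q') = AdjoinRoot.mk p q' * -AdjoinRoot.mk p (p /ₘ q') := by
      have := congrArg (AdjoinRoot.mk p) (modByMonic_add_div p q')
      rw [map_add, map_mul, AdjoinRoot.mk_self] at this
      linear_combination this
    exact isUnit_of_mul_isUnit_left (hmod ▸ hr)

theorem isGradedField_adjoinRootStr (hp : 𝒜.IsHomogIrreducible g₀ p) (hK : 𝒜.IsGradedField) :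
    (𝒜.adjoinRootStr g₀ hp.monic hp.isHomogPoly).IsGradedField := by
  have hp1 : p ≠ 1 := fun h1 => by simpa [h1] using hp.natDegree_pos
  refine ⟨⟨1, 0, fun h => hp1 ?_⟩, ?_⟩
  · rw [← map_one (AdjoinRoot.mk p), AdjoinRoot.mk_eq_zero] at h
    exact hp.monic.isUnit_iff.mp (isUnit_of_dvd_one h)
  · rintro x ⟨g, hx⟩ hx0
    set r := AdjoinRoot.modByMonicHom hp.monic x
    have hxr : AdjoinRoot.mk p r = x := AdjoinRoot.mk_leftInverse hp.monic x
    have hr0 : r ≠ 0 := fun h => hx0 (by rw [← hxr, h, map_zero])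
    have hrr : r %ₘ p = r := by rw [← AdjoinRoot.modByMonicHom_mk hp.monic, hxr]
    have hrd : r.natDegree < p.natDegree := hrr ▸ natDegree_modByMonic_lt r hp.monic hp1
    exact hxr ▸ hp.isUnit_mk hK ⟨g, hx⟩ hr0 hrd

theorem isFiniteExt_adjoinRootStr (hp : 𝒜.IsHomogIrreducible g₀ p) (hK : 𝒜.IsGradedField) :
    𝒜.IsFiniteExt (𝒜.adjoinRootStr g₀ hp.monic hp.isHomogPoly) (AdjoinRoot.of p) where
  isGradedField := hp.isGradedField_adjoinRootStr hK
  injective a b hab := by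
    have : Nontrivial K := hK.1
    have hC : ∀ c : K, C c %ₘ p = C c := fun c => (modByMonic_eq_self_iff hp.monic).mpr
      (degree_C_le.trans_lt (natDegree_pos_iff_degree_pos.mp hp.natDegree_pos))
    have := congrArg (AdjoinRoot.modByMonicHom hp.monic) hab
    rwa [AdjoinRoot.of, RingHom.comp_apply, RingHom.comp_apply, AdjoinRoot.modByMonicHom_mk,
      AdjoinRoot.modByMonicHom_mk, hC, hC, C_inj] at this
  map_mem_deg _ _ ha := mk_mem_adjoinRootStr_deg g₀ _ _ (𝒜.C_mem_polyDeg g₀ ha)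
  isFiniteFree := AdjoinRoot.algebraMap_eq p ▸
    RingHom.isFiniteFree_algebraMap_of_basis (AdjoinRoot.powerBasis' hp.monic).basis

theorem root_mem_adjoinRootStr_deg (hp : 𝒜.IsHomogIrreducible g₀ p) :
    AdjoinRoot.root p ∈ (𝒜.adjoinRootStr g₀ hp.monic hp.isHomogPoly).deg g₀ :=
  AdjoinRoot.mk_X (f := p) ▸ mk_mem_adjoinRootStr_deg g₀ _ _ (𝒜.X_mem_polyDeg g₀)

end IsHomogIrreducible

theorem exists_isFiniteExt_isRoot (hK : 𝒜.IsGradedField) {f : K[X]} (hf0 : f ≠ 0)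
    (hf : 𝒜.IsHomogPoly g₀ f) (hfd : 0 < f.natDegree) :
    ∃ (L : Type v) (_ : CommRing L) (ℬ : GradedStr G L) (φ : K →+* L),
      𝒜.IsFiniteExt ℬ φ ∧ ∃ x ∈ ℬ.deg g₀, (f.map φ).IsRoot x := by
  obtain ⟨c, -, f', hf', hf'h, hdeg, rfl⟩ := hK.exists_monic_eq_C_mul g₀ hf0 hf
  obtain ⟨p, hp, hpf⟩ := exists_isHomogIrreducible_dvd g₀ hf' hf'h (hdeg ▸ hfd)
  exact ⟨AdjoinRoot p, _, _, _, hp.isFiniteExt_adjoinRootStr hK, _, hp.root_mem_adjoinRootStr_deg,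
    (AdjoinRoot.isRoot_root p).dvd (Polynomial.map_dvd _ (dvd_mul_of_dvd_right hpf _))⟩

theorem exists_isFiniteExt_splits (hK : 𝒜.IsGradedField) {d : ℕ} {f : K[X]} (hf0 : f ≠ 0)
    (hf : 𝒜.IsHomogPoly g₀ f) (hfd : f.natDegree = d) :
    ∃ (L : Type v) (_ : CommRing L) (ℬ : GradedStr G L) (φ : K →+* L), 𝒜.IsFiniteExt ℬ φ ∧
      ∃ x : Fin d → L, (∀ i, x i ∈ ℬ.deg g₀) ∧
        f.map φ = C (φ f.leadingCoeff) * ∏ i, (X - C (x i)) := by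
  induction d generalizing K with
  | zero =>
    refine ⟨K, _, 𝒜, RingHom.id K, IsFiniteExt.id hK, Fin.elim0, fun i => i.elim0, ?_⟩
    rw [map_id, Fin.prod_univ_zero, mul_one, RingHom.id_apply, leadingCoeff, hfd,
      ← eq_C_of_natDegree_eq_zero hfd]
  | succ d ih =>
    obtain ⟨K₁, _, 𝒜₁, φ, hφ, t, ht, hroot⟩ := exists_isFiniteExt_isRoot g₀ hK hf0 hf (by omega)
    set f₁ := f.map φ /ₘ (X - C t)
    have hfac : (X - C t) * f₁ = f.map φ := mul_divByMonic_eq_iff_isRoot.mpr hroot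
    have hf₁0 : f₁ ≠ 0 :=
      right_ne_zero_of_mul (hfac ▸ (Polynomial.map_ne_zero_iff hφ.injective).mpr hf0)
    obtain ⟨h, hfh⟩ := hf
    have hf₁ : 𝒜₁.IsHomogPoly g₀ f₁ := ⟨_,
      (𝒜₁.divByMonic_modByMonic_mem_polyDeg g₀ (monic_X_sub_C t) (𝒜₁.X_sub_C_mem_polyDeg g₀ ht)
        (𝒜.map_mem_polyDeg g₀ 𝒜₁ hφ.map_mem_deg hfh)).1⟩
    have : Nontrivial K₁ := hφ.isGradedField.1
    have hf₁d : f₁.natDegree = d := by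
      rw [natDegree_divByMonic _ (monic_X_sub_C t), natDegree_map_eq_of_injective hφ.injective, hfd,
        natDegree_X_sub_C, Nat.add_sub_cancel]
    obtain ⟨L, _, ℬ, ψ, hψ, x, hx, hsplit⟩ := ih hφ.isGradedField hf₁0 hf₁ hf₁d
    refine ⟨L, _, ℬ, ψ.comp φ, hψ.comp hφ, Fin.cons (ψ t) x,
      Fin.cases (hψ.map_mem_deg _ _ ht) hx, ?_⟩
    have hlc : f₁.leadingCoeff = φ f.leadingCoeff := by
      rw [← leadingCoeff_map_of_injective hφ.injective, ← hfac,
        leadingCoeff_monic_mul (monic_X_sub_C t)]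
    rw [← map_map, ← hfac, Polynomial.map_mul, hsplit, hlc, Fin.prod_univ_succ]
    simp only [Fin.cons_zero, Fin.cons_succ, Polynomial.map_sub, map_X, map_C, RingHom.comp_apply]
    ring

end GradedField

end GradedStr

/-- Let `K` be a `G`-graded field, `g₀ ∈ G`, and `f` a nonzero
homogeneous polynomial in `K[g₀⁻¹T]`.  There is a finite extension of `G`-graded
fields `L/K` (an injective graded ring homomorphism `φ : K → L` into a graded field
`L` that is free of finite rank over `K`) such that `f` splits completely in
`L[g₀⁻¹T]` into a product of homogeneous polynomials of degree at most `1`; in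
particular, if `f` is monic then `f = (T - x₁) ⋯ (T - x_n)` with each `x_i` a
homogeneous element of `L` of grading `g₀`. -/
theorem graded_splitting_field_exists
    {G : Type u} [CommGroup G] {K : Type v} [CommRing K]
    (𝒜 : GradedStr G K) (hK : 𝒜.IsGradedField) (g₀ : G)
    (f : Polynomial K) (hf0 : f ≠ 0) (hfhom : 𝒜.IsHomogPoly g₀ f) :
    ∃ (L : Type v) (_ : CommRing L) (ℬ : GradedStr G L) (φ : K →+* L),
      ℬ.IsGradedField ∧ Function.Injective φ ∧
      (∀ g : G, ∀ a ∈ 𝒜.deg g, φ a ∈ ℬ.deg g) ∧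
      (∃ (n : ℕ) (e : Fin n → L), ∀ y : L, ∃! c : Fin n → K,
        y = ∑ i, φ (c i) * e i) ∧
      (∃ (m : ℕ) (q : Fin m → Polynomial L),
        (∀ i, ℬ.IsHomogPoly g₀ (q i) ∧ (q i).natDegree ≤ 1) ∧
        f.map φ = ∏ i, q i) ∧
      (f.Monic → ∃ x : Fin f.natDegree → L, (∀ i, x i ∈ ℬ.deg g₀) ∧
        f.map φ = ∏ i, (Polynomial.X - Polynomial.C (x i))) := by
  obtain ⟨L, _, ℬ, φ, hφ, x, hx, hsplit⟩ := GradedStr.exists_isFiniteExt_splits g₀ hK hf0 hfhom rfl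
  have : Nontrivial L := hφ.isGradedField.1
  obtain ⟨h, hf⟩ := hfhom
  have hlc : ℬ.IsHomogPoly g₀ (C (φ f.leadingCoeff)) :=
    ⟨_, ℬ.C_mem_polyDeg g₀ (hφ.map_mem_deg _ _ (hf _))⟩
  refine ⟨L, _, ℬ, φ, hφ.isGradedField, hφ.injective, hφ.map_mem_deg, hφ.isFiniteFree,
    ⟨_, Fin.cons (C (φ f.leadingCoeff)) fun i => X - C (x i), ?_, ?_⟩, fun hmon => ⟨x, hx, ?_⟩⟩
  · exact Fin.cases ⟨hlc, by simp⟩ fun i =>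
    ⟨⟨g₀, ℬ.X_sub_C_mem_polyDeg g₀ (hx i)⟩, (natDegree_X_sub_C _).le⟩
  · rw [hsplit, Fin.prod_univ_succ]
    simp only [Fin.cons_zero, Fin.cons_succ]
  · rw [hsplit, hmon.leadingCoeff, map_one, C_1, one_mul]
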